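/- Let $f : \mathbb{R} \to [0,1]$ be measurable with $\int f(x)\,dx < \infty$, and fix $y \in \mathbb{R}$ with $f(y) > 0$. Then the rescaled density power divergence log-potential $\gamma \mapsto \frac{1}{\gamma} f(y)^{\gamma} - \frac{1}{1+\gamma} \int f(x)^{1+\gamma}\,dx - \frac{1}{\gamma} + 1$ is monotone increasing on $(0,\infty)$. -/
import Mathlib


open MeasureTheory

/-- The difference quotient `(a^γ - 1)/γ` is monotone in `γ` on `(0,∞)` for `0 < a ≤ 1`. -/
lemma aux_quot_mono {a : ℝ} (ha : 0 < a) (ha1 : a ≤ 1) {s t : ℝ} (hs : 0 < s)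
    (hst : s ≤ t) : (a ^ s - 1) / s ≤ (a ^ t - 1) / t := by
  have ht : 0 < t := lt_of_lt_of_le hs hst
  rw [div_le_div_iff₀ hs ht]
  -- suffices: t * (a^s - 1) ≤ s * (a^t - 1), i.e. a^s ≤ 1 + (s/t)(a^t - 1)
  have hb : (0:ℝ) < a ^ t := Real.rpow_pos_of_pos ha t
  have hbern : (a ^ t) ^ (s / t) ≤ 1 + (s / t) * (a ^ t - 1) := by
    have := rpow_one_add_le_one_add_mul_self (s := a ^ t - 1)
      (by linarith) (p := s / t) (by positivity)
      (by rw [div_le_one ht]; exact hst)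
    simpa using this
  have hpow : (a ^ t) ^ (s / t) = a ^ s := by
    rw [← Real.rpow_mul ha.le]
    congr 1
    field_simp
  rw [hpow] at hbern
  have := mul_le_mul_of_nonneg_left hbern ht.le
  have hts : t * (1 + s / t * (a ^ t - 1)) = t + s * (a ^ t - 1) := by
    field_simp
  nlinarith [this]

theorem stmt_2 (f : ℝ → ℝ) (hm : Measurable f) (h0 : ∀ x, 0 ≤ f x) (h1 : ∀ x, f x ≤ 1)
    (hint : Integrable f) (y : ℝ) (hy : 0 < f y) :
    MonotoneOn
      (fun γ : ℝ => (1 / γ) * f y ^ γ - (1 / (1 + γ)) * (∫ x, f x ^ (1 + γ)) - 1 / γ + 1)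
      (Set.Ioi (0 : ℝ)) := by
  -- pointwise bound and integrability of f^(1+γ)
  have hptle : ∀ (γ : ℝ), 0 ≤ γ → ∀ x, f x ^ (1 + γ) ≤ f x := by
    intro γ hγ x
    have := Real.rpow_le_rpow_of_exponent_ge' (z := 1) (y := 1 + γ) (h0 x) (h1 x)
      zero_le_one (by linarith)
    simpa using this
  have hintpow : ∀ (γ : ℝ), 0 ≤ γ → Integrable (fun x => f x ^ (1 + γ)) := by
    intro γ hγ
    have hmeas : Measurable (fun x => f x ^ (1 + γ)) := by fun_prop
    refine hint.mono' hmeas.aestronglyMeasurable ?_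
    filter_upwards with x
    rw [Real.norm_eq_abs, abs_of_nonneg (Real.rpow_nonneg (h0 x) _)]
    exact hptle γ hγ x
  have hintnn : ∀ (γ : ℝ), 0 ≤ (∫ x, f x ^ (1 + γ)) := fun γ =>
    integral_nonneg (fun x => Real.rpow_nonneg (h0 x) _)
  intro s hs t ht hst
  simp only [Set.mem_Ioi] at hs ht
  dsimp only
  -- first part : ((f y)^γ - 1)/γ is monotone
  have h1p : (1 / s) * f y ^ s - 1 / s ≤ (1 / t) * f y ^ t - 1 / t := by
    have e1 : (1 / s) * f y ^ s - 1 / s = (f y ^ s - 1) / s := by field_simp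
    have e2 : (1 / t) * f y ^ t - 1 / t = (f y ^ t - 1) / t := by field_simp
    rw [e1, e2]
    exact aux_quot_mono hy (h1 y) hs hst
  -- second part : (1/(1+γ)) * ∫ f^(1+γ) is antitone
  have hIle : (∫ x, f x ^ (1 + t)) ≤ (∫ x, f x ^ (1 + s)) := by
    refine integral_mono (hintpow t ht.le) (hintpow s hs.le) ?_
    intro x
    rcases eq_or_lt_of_le (h0 x) with h | h
    · simp [← h, Real.zero_rpow (by positivity : (1:ℝ) + t ≠ 0),
        Real.zero_rpow (by positivity : (1:ℝ) + s ≠ 0)]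
    · exact Real.rpow_le_rpow_of_exponent_ge h (h1 x) (by linarith)
  have h2p : (1 / (1 + t)) * (∫ x, f x ^ (1 + t)) ≤
      (1 / (1 + s)) * (∫ x, f x ^ (1 + s)) := by
    calc (1 / (1 + t)) * (∫ x, f x ^ (1 + t))
        ≤ (1 / (1 + s)) * (∫ x, f x ^ (1 + t)) := by
          apply mul_le_mul_of_nonneg_right _ (hintnn t)
          apply one_div_le_one_div_of_le (by linarith) (by linarith)
      _ ≤ (1 / (1 + s)) * (∫ x, f x ^ (1 + s)) := by
          apply mul_le_mul_of_nonneg_left hIle (by positivity)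
  linarith
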